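/- For any norm χ on a finite-dimensional vector space V of dimension N and any basis (e_j) of V, the volume vol(χ) (the mean of the spectrum of χ) satisfies vol(χ) ≥ (1/N)∑_j χ(e_j), with equality if and only if (e_j) is χ-orthogonal. -/

import Mathlib

open scoped ENNReal

noncomputable section
attribute [local instance] Classical.propDecidable

/-- An additive non-Archimedean norm on a vector space over a trivially valued field:
`χ : V → ℝ ∪ {+∞}` with `χ v = +∞` iff `v = 0`, invariance under nonzero scalars, and
the ultrametric inequality `χ(v+w) ≥ min (χ v) (χ w)`. -/
structure NAnorm (k V : Type*) [Field k] [AddCommGroup V] [Module k V] where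
  toFun : V → EReal
  ne_bot : ∀ v, toFun v ≠ ⊥
  top_iff : ∀ v, toFun v = ⊤ ↔ v = 0
  smul_eq : ∀ (a : k) (v : V), a ≠ 0 → toFun (a • v) = toFun v
  ultra : ∀ v w, min (toFun v) (toFun w) ≤ toFun (v + w)

namespace NAnorm

variable {k V : Type*} [Field k] [AddCommGroup V] [Module k V]

/-- A basis is `χ`-orthogonal if the norm of any linear combination is the minimum of the
norms of the basis vectors appearing with a nonzero coefficient. -/
def IsOrthogonal {N : ℕ} (χ : NAnorm k V) (b : Module.Basis (Fin N) k V) : Prop :=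
  ∀ a : Fin N → k, χ.toFun (∑ i, a i • b i) = ⨅ i ∈ {i | a i ≠ 0}, χ.toFun (b i)

/-- The real value of the norm (finite on nonzero vectors). -/
noncomputable def val (χ : NAnorm k V) (v : V) : ℝ := (χ.toFun v).toReal

/-- The pointwise minimum of two norms. -/
noncomputable def inf (χ χ' : NAnorm k V) : NAnorm k V where
  toFun v := min (χ.toFun v) (χ'.toFun v)
  ne_bot v h := by
    rcases min_cases (χ.toFun v) (χ'.toFun v) with ⟨h1, _⟩ | ⟨h1, _⟩
    · exact χ.ne_bot v (by rw [← h1]; exact h)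
    · exact χ'.ne_bot v (by rw [← h1]; exact h)
  top_iff v := by
    constructor
    · intro h
      have h1 : (⊤ : EReal) ≤ χ.toFun v := by rw [← h]; exact min_le_left _ _
      exact (χ.top_iff v).1 (le_antisymm le_top h1)
    · intro h
      show min (χ.toFun v) (χ'.toFun v) = ⊤
      rw [(χ.top_iff v).2 h, (χ'.top_iff v).2 h, min_self]
  smul_eq a v ha := by
    show min (χ.toFun (a • v)) (χ'.toFun (a • v)) = min (χ.toFun v) (χ'.toFun v)
    rw [χ.smul_eq a v ha, χ'.smul_eq a v ha]
  ultra v w := by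
    refine le_min ?_ ?_
    · exact le_trans (min_le_min (min_le_left _ _) (min_le_left _ _)) (χ.ultra v w)
    · exact le_trans (min_le_min (min_le_right _ _) (min_le_right _ _)) (χ'.ultra v w)

/-- The Goldman–Iwahori distance `d_∞(χ,χ') = sup_{v ≠ 0} |χ(v) - χ'(v)|`. -/
noncomputable def dInfty (χ χ' : NAnorm k V) : ℝ≥0∞ :=
  ⨆ v : {v : V // v ≠ 0}, ENNReal.ofReal |χ.val v.1 - χ'.val v.1|

/-- The distance `d_p(χ,χ')`, computed from the relative spectrum of `χ,χ'` in a joint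
orthogonal basis. -/
noncomputable def dp (p : ℝ) (χ χ' : NAnorm k V) : ℝ :=
  if h : ∃ b : Module.Basis (Fin (Module.finrank k V)) k V, χ.IsOrthogonal b ∧ χ'.IsOrthogonal b then
    ((Module.finrank k V : ℝ)⁻¹ *
      ∑ j, |χ.val (h.choose j) - χ'.val (h.choose j)| ^ p) ^ (1 / p)
  else 0

/-- The volume of a norm: the mean of its spectrum, computed in an orthogonal basis. -/
noncomputable def vol (χ : NAnorm k V) : ℝ :=
  if h : ∃ b : Module.Basis (Fin (Module.finrank k V)) k V, χ.IsOrthogonal b then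
    (Module.finrank k V : ℝ)⁻¹ * ∑ j, χ.val (h.choose j)
  else 0

end NAnorm

/-
A basis maximising `∑ j, χ (e j)` exists because `χ` takes only finitely many values: vectors
with pairwise distinct values are linearly independent. Such a basis is orthogonal, since
otherwise some `v = ∑ a_i e_i` has `χ v > χ (e_i)` for an `i` with `a_i ≠ 0`, and exchanging
`e_i` for `v` increases the sum. Conversely, if `b` is orthogonal and `e` is any basis, the
expansion of `det (b.toMatrix e)` yields a permutation `σ` with `e_j` having a nonzero
`b_{σ j}`-coordinate, so `χ (e_j) ≤ χ (b_{σ j})` and `∑ χ (e_j) ≤ ∑ χ (b_j)`.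
-/

open Function Module

namespace Module.Basis

variable {ι R M : Type*} [Fintype ι] [CommRing R] [AddCommGroup M] [Module R M]

theorem det_update_self [DecidableEq ι] (e : Basis ι R M) (i : ι) (v : M) :
    e.det (update e i v) = e.repr v i := by
  simpa [e.det_apply, e.toMatrix_update, e.toMatrix_self, Matrix.one_apply] using
    Matrix.det_updateCol_sum (1 : Matrix ι ι R) i (e.repr v)

theorem exists_coe_eq_update [DecidableEq ι] (e : Basis ι R M) (i : ι) (v : M)
    (hv : IsUnit (e.repr v i)) : ∃ e' : Basis ι R M, ⇑e' = update e i v := by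
  obtain ⟨hli, hspan⟩ := e.is_basis_iff_det.mpr (e.det_update_self i v ▸ hv)
  exact ⟨Basis.mk hli hspan.ge, Basis.coe_mk _ _⟩

theorem exists_perm_repr_ne_zero [Nontrivial R] (b e : Basis ι R M) :
    ∃ σ : Equiv.Perm ι, ∀ j, b.repr (e j) (σ j) ≠ 0 := by
  have hdet : (b.toMatrix e).det ≠ 0 := (b.isUnit_det e).ne_zero
  rw [Matrix.det_apply] at hdet
  obtain ⟨σ, -, hσ⟩ := Finset.exists_ne_zero_of_sum_ne_zero hdet
  refine ⟨σ, fun j hj => hσ ?_⟩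
  rw [Finset.prod_eq_zero (Finset.mem_univ j) (by rwa [b.toMatrix_apply]), smul_zero]

end Module.Basis

namespace NAnorm

variable {k V : Type*} [Field k] [AddCommGroup V] [Module k V] (χ : NAnorm k V)

theorem toFun_zero : χ.toFun 0 = ⊤ := (χ.top_iff 0).2 rfl

theorem toFun_ne_top {v : V} (hv : v ≠ 0) : χ.toFun v ≠ ⊤ := fun h => hv ((χ.top_iff v).1 h)

theorem toFun_neg (v : V) : χ.toFun (-v) = χ.toFun v := by
  simpa using χ.smul_eq (-1) v (by norm_num)

theorem toFun_add_eq_of_lt {v w : V} (h : χ.toFun v < χ.toFun w) :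
    χ.toFun (v + w) = χ.toFun v := by
  refine le_antisymm ?_ (min_eq_left h.le ▸ χ.ultra v w)
  have := χ.ultra (v + w) (-w)
  rw [χ.toFun_neg, add_neg_cancel_right] at this
  exact (min_le_iff.mp this).resolve_right h.not_ge

theorem le_toFun_sum {ι : Type*} {c : EReal} (s : Finset ι) (w : ι → V)
    (h : ∀ i ∈ s, c ≤ χ.toFun (w i)) : c ≤ χ.toFun (∑ i ∈ s, w i) :=
  Finset.sum_induction w (fun v => c ≤ χ.toFun v)
    (fun _ _ hv hw => (le_min hv hw).trans (χ.ultra _ _)) (χ.toFun_zero ▸ le_top) h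

theorem lt_toFun_sum {ι : Type*} {c : EReal} (hc : c ≠ ⊤) (s : Finset ι) (w : ι → V)
    (h : ∀ i ∈ s, c < χ.toFun (w i)) : c < χ.toFun (∑ i ∈ s, w i) :=
  Finset.sum_induction w (fun v => c < χ.toFun v)
    (fun _ _ hv hw => (lt_min hv hw).trans_le (χ.ultra _ _)) (χ.toFun_zero ▸ hc.lt_top) h

theorem biInf_le_toFun_sum {ι : Type*} [Fintype ι] (a : ι → k) (b : ι → V) :
    ⨅ i ∈ {i | a i ≠ 0}, χ.toFun (b i) ≤ χ.toFun (∑ i, a i • b i) := by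
  refine χ.le_toFun_sum _ _ fun i _ => ?_
  by_cases hi : a i = 0
  · simp [hi, χ.toFun_zero]
  · rw [χ.smul_eq _ _ hi]
    exact biInf_le (fun i => χ.toFun (b i)) (show i ∈ {i | a i ≠ 0} from hi)

theorem coe_val {v : V} (hv : v ≠ 0) : (χ.val v : EReal) = χ.toFun v :=
  EReal.coe_toReal (χ.toFun_ne_top hv) (χ.ne_bot v)

theorem val_le_val {v w : V} (hv : v ≠ 0) (hw : w ≠ 0) (h : χ.toFun v ≤ χ.toFun w) :
    χ.val v ≤ χ.val w := by
  rwa [← EReal.coe_le_coe_iff, χ.coe_val hv, χ.coe_val hw]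

theorem val_lt_val {v w : V} (hv : v ≠ 0) (hw : w ≠ 0) (h : χ.toFun v < χ.toFun w) :
    χ.val v < χ.val w := by
  rwa [← EReal.coe_lt_coe_iff, χ.coe_val hv, χ.coe_val hw]

theorem linearIndependent_of_injective {ι : Type*} (w : ι → V) (hw0 : ∀ i, w i ≠ 0)
    (hw : Injective (χ.toFun ∘ w)) : LinearIndependent k w := by
  rw [linearIndependent_iff']
  intro s g hg i hi
  by_contra hgi
  obtain ⟨j, hj, hmin⟩ := (s.filter (g · ≠ 0)).exists_min_image (χ.toFun ∘ w)
    ⟨i, Finset.mem_filter.mpr ⟨hi, hgi⟩⟩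
  rw [Finset.mem_filter] at hj
  have hrest : χ.toFun (g j • w j) < χ.toFun (∑ l ∈ s.erase j, g l • w l) := by
    rw [χ.smul_eq _ _ hj.2]
    refine χ.lt_toFun_sum (χ.toFun_ne_top (hw0 j)) _ _ fun l hl => ?_
    by_cases hgl : g l = 0
    · simpa [hgl, χ.toFun_zero] using (χ.toFun_ne_top (hw0 j)).lt_top
    · rw [χ.smul_eq _ _ hgl]
      exact (hmin l (Finset.mem_filter.mpr ⟨Finset.mem_of_mem_erase hl, hgl⟩)).lt_of_ne
        (hw.ne (Finset.ne_of_mem_erase hl).symm)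
  have := χ.toFun_add_eq_of_lt hrest
  rw [Finset.add_sum_erase s (fun l => g l • w l) hj.1, hg, χ.toFun_zero, χ.smul_eq _ _ hj.2] at this
  exact χ.toFun_ne_top (hw0 j) this.symm

theorem finite_range_toFun [FiniteDimensional k V] : (Set.range χ.toFun).Finite := by
  refine Set.Finite.of_sdiff ?_ (Set.finite_singleton ⊤)
  choose w hw using fun x : ↥(Set.range χ.toFun \ {⊤}) => x.2.1
  have hw0 : ∀ x, w x ≠ 0 := fun x h => x.2.2 (by rw [← hw x, h, χ.toFun_zero]; rfl)
  have hli := χ.linearIndependent_of_injective w hw0 fun x y hxy =>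
    Subtype.ext ((hw x).symm.trans (hxy.trans (hw y)))
  exact Set.finite_coe_iff.mp hli.finite

theorem finite_range_val [FiniteDimensional k V] : (Set.range χ.val).Finite :=
  Set.range_comp EReal.toReal χ.toFun ▸ χ.finite_range_toFun.image _

theorem exists_basis_forall_sum_le [FiniteDimensional k V] {ι : Type*} [Fintype ι]
    (e : Basis ι k V) : ∃ b : Basis ι k V, ∀ e' : Basis ι k V,
      ∑ j, χ.val (e' j) ≤ ∑ j, χ.val (b j) := by
  have hfin : (Set.range fun e' : Basis ι k V => ∑ j, χ.val (e' j)).Finite := by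
    refine ((Set.Finite.pi fun _ => χ.finite_range_val).image fun g : ι → ℝ => ∑ j, g j).subset ?_
    rintro _ ⟨e', rfl⟩
    exact ⟨fun j => χ.val (e' j), fun j _ => ⟨e' j, rfl⟩, rfl⟩
  obtain ⟨_, ⟨b, rfl⟩, hb⟩ := Set.exists_max_image _ id hfin ⟨_, e, rfl⟩
  exact ⟨b, fun e' => hb _ ⟨e', rfl⟩⟩

theorem toFun_le_of_repr_ne_zero {N : ℕ} {b : Basis (Fin N) k V} (hb : χ.IsOrthogonal b)
    {v : V} {i : Fin N} (hi : b.repr v i ≠ 0) : χ.toFun v ≤ χ.toFun (b i) := by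
  have := hb (b.repr v)
  rw [b.sum_repr] at this
  exact this ▸ biInf_le _ hi

theorem sum_le_of_isOrthogonal {N : ℕ} {b : Basis (Fin N) k V} (hb : χ.IsOrthogonal b)
    (e : Basis (Fin N) k V) : ∑ j, χ.val (e j) ≤ ∑ j, χ.val (b j) := by
  obtain ⟨σ, hσ⟩ := b.exists_perm_repr_ne_zero e
  calc ∑ j, χ.val (e j)
      ≤ ∑ j, χ.val (b (σ j)) := Finset.sum_le_sum fun j _ =>
        χ.val_le_val (e.ne_zero j) (b.ne_zero _) (χ.toFun_le_of_repr_ne_zero hb (hσ j))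
    _ = ∑ j, χ.val (b j) := Equiv.sum_comp σ fun i => χ.val (b i)

theorem exists_toFun_lt_toFun_sum {N : ℕ} {e : Basis (Fin N) k V} (he : ¬ χ.IsOrthogonal e) :
    ∃ (a : Fin N → k) (i : Fin N), a i ≠ 0 ∧ χ.toFun (e i) < χ.toFun (∑ j, a j • e j) := by
  obtain ⟨a, ha⟩ := not_forall.mp he
  obtain ⟨i, hi, hlt⟩ := lt_biInf_iff.mp ((χ.biInf_le_toFun_sum a e).lt_of_ne (Ne.symm ha))
  exact ⟨a, i, hi, hlt⟩

theorem exists_sum_lt_of_not_isOrthogonal {N : ℕ} {e : Basis (Fin N) k V}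
    (he : ¬ χ.IsOrthogonal e) : ∃ e' : Basis (Fin N) k V, ∑ j, χ.val (e j) < ∑ j, χ.val (e' j) := by
  obtain ⟨a, i, hai, hlt⟩ := χ.exists_toFun_lt_toFun_sum he
  set v := ∑ j, a j • e j
  have hrepr : e.repr v i = a i := by rw [e.repr_sum_self]
  have hv : v ≠ 0 := fun h => hai (by simpa [h] using hrepr.symm)
  have hgain : χ.val (e i) < χ.val v := χ.val_lt_val (e.ne_zero i) hv hlt
  obtain ⟨e', he'⟩ := e.exists_coe_eq_update i v (hrepr ▸ hai.isUnit)
  refine ⟨e', Finset.sum_lt_sum (fun j _ => ?_) ⟨i, Finset.mem_univ i, by simpa [he'] using hgain⟩⟩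
  rcases eq_or_ne j i with rfl | hj
  · simpa [he'] using hgain.le
  · simp [he', update_of_ne hj]

theorem exists_isOrthogonal [FiniteDimensional k V] :
    ∃ b : Basis (Fin (finrank k V)) k V, χ.IsOrthogonal b := by
  obtain ⟨b, hb⟩ := χ.exists_basis_forall_sum_le (Module.finBasis k V)
  refine ⟨b, by_contra fun h => ?_⟩
  obtain ⟨e', he'⟩ := χ.exists_sum_lt_of_not_isOrthogonal h
  exact (hb e').not_gt he'

theorem vol_eq_of_isOrthogonal {b : Basis (Fin (finrank k V)) k V} (hb : χ.IsOrthogonal b) :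
    χ.vol = (finrank k V : ℝ)⁻¹ * ∑ j, χ.val (b j) := by
  have hex : ∃ b : Basis (Fin (finrank k V)) k V, χ.IsOrthogonal b := ⟨b, hb⟩
  rw [vol, dif_pos hex]
  congr 1
  exact le_antisymm (χ.sum_le_of_isOrthogonal hb _) (χ.sum_le_of_isOrthogonal hex.choose_spec b)

end NAnorm

/-- For any norm  on a finite-dimensional vector space  and any basis
, the volume (mean of the spectrum) satisfies , with
equality iff  is -orthogonal. -/
theorem vol_ge_mean_of_basis {k V : Type*} [Field k] [AddCommGroup V] [Module k V]
    [FiniteDimensional k V] (χ : NAnorm k V)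
    (e : Module.Basis (Fin (Module.finrank k V)) k V) :
    (Module.finrank k V : ℝ)⁻¹ * ∑ j, χ.val (e j) ≤ χ.vol ∧
    ((Module.finrank k V : ℝ)⁻¹ * ∑ j, χ.val (e j) = χ.vol ↔ χ.IsOrthogonal e) := by
  obtain ⟨b, hb⟩ := χ.exists_isOrthogonal
  have hle := χ.sum_le_of_isOrthogonal hb e
  rw [χ.vol_eq_of_isOrthogonal hb]
  refine ⟨by gcongr, fun heq => by_contra fun he => ?_, fun he => ?_⟩
  · obtain ⟨e', he'⟩ := χ.exists_sum_lt_of_not_isOrthogonal he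
    have hlt := he'.trans_le (χ.sum_le_of_isOrthogonal hb e')
    obtain ⟨i, -, -⟩ := Finset.exists_lt_of_sum_lt hlt
    have hN : (0 : ℝ) < (finrank k V : ℝ)⁻¹ := by have := i.pos; positivity
    exact (mul_lt_mul_of_pos_left hlt hN).ne heq
  · rw [le_antisymm hle (χ.sum_le_of_isOrthogonal he b)]
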